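/- arXiv:2406.17478 — 2 statements merged into one kernel-verified Lean document; each statement's English description precedes it below -/
import Mathlib

section
/- Let γ > 1, H(ϱ) = ϱ^γ/(γ−1), and H(ϱ|r) = H(ϱ) − H(r) − H'(r)(ϱ − r). For any compact set K ⊂ (0,∞) there exist constants c₃, c₄ > 0 such that for every ϱ ≥ 0 and every r ∈ K: c₃ (|ϱ − r|² 𝟙_{|ϱ−r|<1} + |ϱ − r|^γ 𝟙_{|ϱ−r|≥1}) ≤ H(ϱ|r) ≤ c₄ (|ϱ − r|² 𝟙_{|ϱ−r|<1} + |ϱ − r|^γ 𝟙_{|ϱ−r|≥1}). -/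
/-!
Write `N(ϱ, r) = ϱ ^ γ - r ^ γ - γ r ^ (γ - 1) (ϱ - r)`, so that `H(ϱ|r) = N(ϱ, r) / (γ - 1)`.
By homogeneity `N(ϱ, r) = r ^ γ N(t, 1)` with `t = ϱ / r`, so everything reduces to the
one-variable function `h(t) = N(t, 1)`, whose derivative is `γ (t ^ (γ - 1) - 1)`. Since
`x ↦ x ^ (γ - 1)` is convex or concave, its secant slopes from `1` over `[0, T]` lie between the
slopes towards `0` and `T`, both positive; integrating gives `h(t) ≍ (t - 1) ^ 2` on `[0, T]`.
For `t ≥ T` large, `h(t)` is squeezed between `t ^ γ / 2` and `t ^ γ`, hence `h(t) ≍ (t - 1) ^ γ`.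
Choosing `T` so large that `ϱ - r ≥ 1` in the second regime, and using that on the bounded first
regime the gauge of the statement is comparable to `(ϱ - r) ^ 2`, gives the two-sided bound
uniformly for `r` in an interval `[a, b] ⊆ (0, ∞)`, which contains the compact set.
-/

open Set Filter

noncomputable def powBregman (γ ϱ r : ℝ) : ℝ := ϱ ^ γ - r ^ γ - γ * r ^ (γ - 1) * (ϱ - r)

noncomputable def quadPowGauge (γ x : ℝ) : ℝ := if |x| < 1 then |x| ^ (2 : ℝ) else |x| ^ γ

theorem le_of_hasDerivAt_of_deriv_mul_sub_nonneg {f f' : ℝ → ℝ} {c x : ℝ}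
    (hf : ∀ y, HasDerivAt f (f' y) y) (hsign : ∀ y ∈ uIcc c x, 0 ≤ f' y * (y - c)) :
    f c ≤ f x := by
  have hcont : Continuous f := continuous_iff_continuousAt.2 fun y ↦ (hf y).continuousAt
  rcases le_total c x with hcx | hxc
  · refine monotoneOn_of_hasDerivWithinAt_nonneg (convex_Icc c x) hcont.continuousOn
      (fun y _ ↦ (hf y).hasDerivWithinAt) (fun y hy ↦ ?_) (left_mem_Icc.2 hcx)
      (right_mem_Icc.2 hcx) hcx
    rw [interior_Icc] at hy
    exact nonneg_of_mul_nonneg_left (hsign y (uIcc_of_le hcx ▸ Ioo_subset_Icc_self hy))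
      (sub_pos.2 hy.1)
  · refine antitoneOn_of_hasDerivWithinAt_nonpos (convex_Icc x c) hcont.continuousOn
      (fun y _ ↦ (hf y).hasDerivWithinAt) (fun y hy ↦ ?_) (left_mem_Icc.2 hxc)
      (right_mem_Icc.2 hxc) hxc
    rw [interior_Icc] at hy
    have := hsign y (uIcc_of_ge hxc ▸ Ioo_subset_Icc_self hy)
    nlinarith [hy.2]

theorem rpow_slope_one_mem_uIcc {p T t : ℝ} (hp : 0 < p) (ht : t ∈ Icc 0 T) (ht1 : t ≠ 1)
    (hT1 : T ≠ 1) :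
    slope (fun x : ℝ ↦ x ^ p) 1 t ∈ uIcc 1 (slope (fun x : ℝ ↦ x ^ p) 1 T) := by
  have h0 : slope (fun x : ℝ ↦ x ^ p) 1 0 = 1 := by
    simp [slope_def_field, Real.zero_rpow hp.ne']
  have h1 : (1 : ℝ) ∈ Ici 0 := by norm_num
  have h0s : (0 : ℝ) ∈ Ici 0 \ {1} := by norm_num
  have hts : t ∈ Ici 0 \ {1} := ⟨ht.1, ht1⟩
  have hTs : T ∈ Ici 0 \ {1} := ⟨ht.1.trans ht.2, hT1⟩
  suffices slope (fun x : ℝ ↦ x ^ p) 1 t ∈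
      uIcc (slope (fun x : ℝ ↦ x ^ p) 1 0) (slope (fun x : ℝ ↦ x ^ p) 1 T) by rwa [h0] at this
  rcases le_total 1 p with hp1 | hp1
  · have hmono := (convexOn_rpow hp1).slope_mono h1
    exact mem_uIcc_of_le (hmono h0s hts ht.1) (hmono hts hTs ht.2)
  · have hanti := (Real.concaveOn_rpow hp.le hp1).slope_anti h1
    exact mem_uIcc_of_ge (hanti hts hTs ht.2) (hanti h0s hts ht.1)

theorem hasDerivAt_powBregman_left {γ : ℝ} (hγ : 1 ≤ γ) (r x : ℝ) :
    HasDerivAt (fun ϱ ↦ powBregman γ ϱ r) (γ * (x ^ (γ - 1) - r ^ (γ - 1))) x :=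
  (((Real.hasDerivAt_rpow_const (Or.inr hγ)).sub_const (r ^ γ)).sub
    (((hasDerivAt_id x).sub_const r).const_mul (γ * r ^ (γ - 1)))).congr_deriv (by ring)

@[simp]
theorem powBregman_self (γ x : ℝ) : powBregman γ x x = 0 := by
  simp [powBregman]

theorem powBregman_mul {γ c x y : ℝ} (hc : 0 < c) (hx : 0 ≤ x) (hy : 0 ≤ y) :
    powBregman γ (c * x) (c * y) = c ^ γ * powBregman γ x y := by
  unfold powBregman
  rw [Real.mul_rpow hc.le hx, Real.mul_rpow hc.le hy, Real.mul_rpow hc.le hy,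
    Real.rpow_sub_one hc.ne']
  field_simp

theorem powBregman_eq_rpow_mul_powBregman_div {γ ϱ r : ℝ} (hϱ : 0 ≤ ϱ) (hr : 0 < r) :
    powBregman γ ϱ r = r ^ γ * powBregman γ (ϱ / r) 1 := by
  rw [← powBregman_mul hr (div_nonneg hϱ hr.le) zero_le_one, mul_div_cancel₀ _ hr.ne', mul_one]

theorem hasDerivAt_powBregman_one_sub_mul_sq {γ : ℝ} (hγ : 1 ≤ γ) (k y : ℝ) :
    HasDerivAt (fun t ↦ powBregman γ t 1 - γ * k / 2 * (t - 1) ^ 2)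
      (γ * (y ^ (γ - 1) - 1 - k * (y - 1))) y :=
  ((hasDerivAt_powBregman_left hγ 1 y).sub
    ((((hasDerivAt_id y).sub_const 1).pow 2).const_mul _)).congr_deriv (by simp; ring)

theorem mul_sq_le_powBregman_one {γ k t : ℝ} (hγ : 1 ≤ γ)
    (hk : ∀ y ∈ uIcc 1 t, k * (y - 1) ^ 2 ≤ (y ^ (γ - 1) - 1) * (y - 1)) :
    γ * k / 2 * (t - 1) ^ 2 ≤ powBregman γ t 1 := by
  have hmin := le_of_hasDerivAt_of_deriv_mul_sub_nonneg
    (hasDerivAt_powBregman_one_sub_mul_sq hγ k) fun y hy ↦ by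
      have hky := hk y hy
      have hfactor : γ * (y ^ (γ - 1) - 1 - k * (y - 1)) * (y - 1) =
          γ * ((y ^ (γ - 1) - 1) * (y - 1) - k * (y - 1) ^ 2) := by ring
      rw [hfactor]
      exact mul_nonneg (by linarith) (by linarith)
  norm_num at hmin
  linarith

theorem powBregman_one_le_mul_sq {γ k t : ℝ} (hγ : 1 ≤ γ)
    (hk : ∀ y ∈ uIcc 1 t, (y ^ (γ - 1) - 1) * (y - 1) ≤ k * (y - 1) ^ 2) :
    powBregman γ t 1 ≤ γ * k / 2 * (t - 1) ^ 2 := by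
  have hmax := le_of_hasDerivAt_of_deriv_mul_sub_nonneg
    (fun y ↦ (hasDerivAt_powBregman_one_sub_mul_sq hγ k y).neg) fun y hy ↦ by
      have hky := hk y hy
      have hfactor : -(γ * (y ^ (γ - 1) - 1 - k * (y - 1))) * (y - 1) =
          γ * (k * (y - 1) ^ 2 - (y ^ (γ - 1) - 1) * (y - 1)) := by ring
      rw [hfactor]
      exact mul_nonneg (by linarith) (by linarith)
  norm_num at hmax
  linarith

theorem powBregman_one_comparable_sq {γ T : ℝ} (hγ : 1 < γ) (hT : 1 < T) :
    ∃ c > 0, ∃ C > 0, ∀ t ∈ Icc 0 T,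
      c * (t - 1) ^ 2 ≤ powBregman γ t 1 ∧ powBregman γ t 1 ≤ C * (t - 1) ^ 2 := by
  set S := slope (fun x : ℝ ↦ x ^ (γ - 1)) 1 T with hSdef
  have hS : 0 < S := by
    rw [hSdef, slope_def_field]
    exact div_pos (by simpa using Real.one_lt_rpow hT (by linarith)) (sub_pos.2 hT)
  have hslope : ∀ y ∈ Icc 0 T, min 1 S * (y - 1) ^ 2 ≤ (y ^ (γ - 1) - 1) * (y - 1) ∧
      (y ^ (γ - 1) - 1) * (y - 1) ≤ max 1 S * (y - 1) ^ 2 := by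
    intro y hy
    rcases eq_or_ne y 1 with rfl | hy1
    · simp
    have hmem : _ ∈ Icc (min 1 S) (max 1 S) :=
      rpow_slope_one_mem_uIcc (by linarith) hy hy1 hT.ne'
    have hfactor : (y ^ (γ - 1) - 1) * (y - 1) =
        slope (fun x : ℝ ↦ x ^ (γ - 1)) 1 y * (y - 1) ^ 2 := by
      rw [slope_def_field, Real.one_rpow]
      field_simp [sub_ne_zero.2 hy1]
    rw [hfactor]
    exact ⟨mul_le_mul_of_nonneg_right hmem.1 (sq_nonneg _),
      mul_le_mul_of_nonneg_right hmem.2 (sq_nonneg _)⟩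
  have hsub : ∀ t ∈ Icc 0 T, uIcc 1 t ⊆ Icc 0 T := fun t ht ↦
    uIcc_subset_Icc ⟨zero_le_one, hT.le⟩ ht
  refine ⟨γ * min 1 S / 2, by positivity, γ * max 1 S / 2, by positivity, fun t ht ↦
    ⟨mul_sq_le_powBregman_one hγ.le fun y hy ↦ (hslope y (hsub t ht hy)).1,
      powBregman_one_le_mul_sq hγ.le fun y hy ↦ (hslope y (hsub t ht hy)).2⟩⟩

theorem powBregman_one_bounds_of_large {γ t : ℝ} (hγ : 1 ≤ γ) (ht : 2 ≤ t)
    (htγ : 2 * γ ≤ t ^ (γ - 1)) :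
    (t - 1) ^ γ / 2 ≤ powBregman γ t 1 ∧ powBregman γ t 1 ≤ 2 ^ γ * (t - 1) ^ γ := by
  have hpow : t ^ γ = t ^ (γ - 1) * t := by
    rw [← Real.rpow_add_one (by linarith), sub_add_cancel]
  have hle : (t - 1) ^ γ ≤ t ^ γ := Real.rpow_le_rpow (by linarith) (by linarith) (by linarith)
  have hle_two_mul : t ^ γ ≤ 2 ^ γ * (t - 1) ^ γ := by
    rw [← Real.mul_rpow zero_le_two (by linarith)]
    exact Real.rpow_le_rpow (by linarith) (by linarith) (by linarith)
  have hone : powBregman γ t 1 = t ^ γ - 1 - γ * (t - 1) := by simp [powBregman]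
  rw [hone]
  constructor
  · nlinarith [mul_le_mul_of_nonneg_right htγ (by linarith : (0 : ℝ) ≤ t)]
  · nlinarith

theorem powBregman_bounds_of_large {γ ϱ r : ℝ} (hγ : 1 ≤ γ) (hr : 0 < r) (ht : 2 ≤ ϱ / r)
    (htγ : 2 * γ ≤ (ϱ / r) ^ (γ - 1)) :
    (ϱ - r) ^ γ / 2 ≤ powBregman γ ϱ r ∧ powBregman γ ϱ r ≤ 2 ^ γ * (ϱ - r) ^ γ := by
  have hϱ : 0 ≤ ϱ := by
    have := (le_div_iff₀' hr).1 ht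
    linarith
  have hsub : (ϱ - r) ^ γ = r ^ γ * (ϱ / r - 1) ^ γ := by
    rw [← Real.mul_rpow hr.le (by linarith), mul_sub, mul_div_cancel₀ _ hr.ne', mul_one]
  obtain ⟨hlow, hup⟩ := powBregman_one_bounds_of_large hγ ht htγ
  rw [hsub, powBregman_eq_rpow_mul_powBregman_div hϱ hr]
  constructor
  · calc r ^ γ * (ϱ / r - 1) ^ γ / 2 = r ^ γ * ((ϱ / r - 1) ^ γ / 2) := by ring
      _ ≤ r ^ γ * powBregman γ (ϱ / r) 1 := by gcongr
  · calc r ^ γ * powBregman γ (ϱ / r) 1 ≤ r ^ γ * (2 ^ γ * (ϱ / r - 1) ^ γ) := by gcongr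
      _ = 2 ^ γ * (r ^ γ * (ϱ / r - 1) ^ γ) := by ring

theorem quadPowGauge_nonneg (γ x : ℝ) : 0 ≤ quadPowGauge γ x := by
  unfold quadPowGauge
  split_ifs <;> positivity

theorem quadPowGauge_of_one_le {γ x : ℝ} (hx : 1 ≤ |x|) : quadPowGauge γ x = |x| ^ γ :=
  if_neg (not_lt.2 hx)

theorem sq_div_le_quadPowGauge {γ R x : ℝ} (hγ : 1 ≤ γ) (hR : 1 ≤ R) (hx : |x| ≤ R) :
    x ^ 2 / R ≤ quadPowGauge γ x := by
  unfold quadPowGauge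
  split_ifs with h
  · rw [Real.rpow_two, sq_abs]
    exact div_le_self (sq_nonneg x) hR
  · replace h := not_lt.1 h
    calc x ^ 2 / R = |x| * (|x| / R) := by rw [← sq_abs]; ring
      _ ≤ |x| * 1 := by gcongr; exact (div_le_one (by linarith)).2 hx
      _ ≤ |x| ^ γ := by rw [mul_one]; exact Real.self_le_rpow_of_one_le h hγ

theorem quadPowGauge_le_rpow_mul_sq {γ R x : ℝ} (hγ : 0 ≤ γ) (hR : 1 ≤ R) (hx : |x| ≤ R) :
    quadPowGauge γ x ≤ R ^ γ * x ^ 2 := by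
  have hRγ : 1 ≤ R ^ γ := Real.one_le_rpow hR hγ
  unfold quadPowGauge
  split_ifs with h
  · rw [Real.rpow_two, sq_abs]
    exact le_mul_of_one_le_left (sq_nonneg x) hRγ
  · replace h := not_lt.1 h
    calc |x| ^ γ ≤ R ^ γ := Real.rpow_le_rpow (abs_nonneg x) hx hγ
      _ ≤ R ^ γ * x ^ 2 :=
          le_mul_of_one_le_right (by linarith) ((one_le_sq_iff_one_le_abs _).2 h)

theorem powBregman_comparable_sq_of_le_mul {γ a b T : ℝ} (hγ : 1 < γ) (ha : 0 < a) (hab : a ≤ b)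
    (hT : 1 < T) :
    ∃ m > 0, ∃ M > 0, ∀ ϱ r, 0 ≤ ϱ → r ∈ Icc a b → ϱ ≤ r * T →
      m * (ϱ - r) ^ 2 ≤ powBregman γ ϱ r ∧ powBregman γ ϱ r ≤ M * (ϱ - r) ^ 2 := by
  obtain ⟨c, hc, C, hC, hbounds⟩ := powBregman_one_comparable_sq hγ hT
  have hb : 0 < b := ha.trans_le hab
  refine ⟨c * a ^ γ / b ^ 2, by positivity, C * b ^ γ / a ^ 2, by positivity, ?_⟩
  rintro ϱ r hϱ ⟨har, hrb⟩ hϱT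
  have hr : 0 < r := ha.trans_le har
  obtain ⟨hlow, hup⟩ := hbounds (ϱ / r) ⟨div_nonneg hϱ hr.le, (div_le_iff₀' hr).2 hϱT⟩
  have hsq : (ϱ - r) ^ 2 = r ^ 2 * (ϱ / r - 1) ^ 2 := by field_simp
  have hpow : a ^ γ ≤ r ^ γ := Real.rpow_le_rpow ha.le har (by linarith)
  have hpow' : r ^ γ ≤ b ^ γ := Real.rpow_le_rpow hr.le hrb (by linarith)
  rw [powBregman_eq_rpow_mul_powBregman_div hϱ hr, hsq]
  constructor
  · calc c * a ^ γ / b ^ 2 * (r ^ 2 * (ϱ / r - 1) ^ 2)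
        = a ^ γ * (r ^ 2 / b ^ 2) * (c * (ϱ / r - 1) ^ 2) := by ring
      _ ≤ r ^ γ * 1 * (c * (ϱ / r - 1) ^ 2) := by
          gcongr
          exact div_le_one_of_le₀ (by gcongr) (by positivity)
      _ ≤ r ^ γ * powBregman γ (ϱ / r) 1 := by rw [mul_one]; gcongr
  · calc r ^ γ * powBregman γ (ϱ / r) 1 ≤ r ^ γ * (C * (ϱ / r - 1) ^ 2) := by gcongr
      _ = r ^ γ * 1 * (C * (ϱ / r - 1) ^ 2) := by ring
      _ ≤ b ^ γ * (r ^ 2 / a ^ 2) * (C * (ϱ / r - 1) ^ 2) := by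
          gcongr
          exact (one_le_div (by positivity)).2 (by gcongr)
      _ = C * b ^ γ / a ^ 2 * (r ^ 2 * (ϱ / r - 1) ^ 2) := by ring

theorem powBregman_comparable_quadPowGauge_of_le_mul {γ a b T : ℝ} (hγ : 1 < γ) (ha : 0 < a)
    (hab : a ≤ b) (hT : 1 < T) :
    ∃ m > 0, ∃ M > 0, ∀ ϱ r, 0 ≤ ϱ → r ∈ Icc a b → ϱ ≤ r * T →
      m * quadPowGauge γ (ϱ - r) ≤ powBregman γ ϱ r ∧
        powBregman γ ϱ r ≤ M * quadPowGauge γ (ϱ - r) := by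
  obtain ⟨m, hm, M, hM, hsq⟩ := powBregman_comparable_sq_of_le_mul hγ ha hab hT
  have hb : 0 < b := ha.trans_le hab
  set R := b * T + 1
  have hR : 1 ≤ R := by simp only [R]; nlinarith
  refine ⟨m / R ^ γ, by positivity, M * R, by positivity, ?_⟩
  rintro ϱ r hϱ ⟨har, hrb⟩ hϱT
  have hrR : r * T ≤ b * T := mul_le_mul_of_nonneg_right hrb (by linarith)
  have hdR : |ϱ - r| ≤ R := abs_sub_le_iff.2 ⟨by linarith, by nlinarith⟩
  obtain ⟨hlow, hup⟩ := hsq ϱ r hϱ ⟨har, hrb⟩ hϱT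
  constructor
  · calc m / R ^ γ * quadPowGauge γ (ϱ - r) ≤ m / R ^ γ * (R ^ γ * (ϱ - r) ^ 2) := by
          gcongr
          exact quadPowGauge_le_rpow_mul_sq (by linarith) hR hdR
      _ = m * (ϱ - r) ^ 2 := by field_simp
      _ ≤ powBregman γ ϱ r := hlow
  · calc powBregman γ ϱ r ≤ M * (ϱ - r) ^ 2 := hup
      _ = M * R * ((ϱ - r) ^ 2 / R) := by field_simp
      _ ≤ M * R * quadPowGauge γ (ϱ - r) := by
          gcongr
          exact sq_div_le_quadPowGauge hγ.le hR hdR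

theorem powBregman_comparable_quadPowGauge_of_large {γ ϱ r : ℝ} (hγ : 1 ≤ γ) (hr : 0 < r)
    (hd : 1 ≤ ϱ - r) (ht : 2 ≤ ϱ / r) (htγ : 2 * γ ≤ (ϱ / r) ^ (γ - 1)) :
    quadPowGauge γ (ϱ - r) / 2 ≤ powBregman γ ϱ r ∧
      powBregman γ ϱ r ≤ 2 ^ γ * quadPowGauge γ (ϱ - r) := by
  rw [quadPowGauge_of_one_le (by rwa [abs_of_nonneg (by linarith)]), abs_of_nonneg (by linarith)]
  exact powBregman_bounds_of_large hγ hr ht htγ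

theorem powBregman_comparable_quadPowGauge {γ a b : ℝ} (hγ : 1 < γ) (ha : 0 < a) (hab : a ≤ b) :
    ∃ m > 0, ∃ M > 0, ∀ ϱ r, 0 ≤ ϱ → r ∈ Icc a b →
      m * quadPowGauge γ (ϱ - r) ≤ powBregman γ ϱ r ∧
        powBregman γ ϱ r ≤ M * quadPowGauge γ (ϱ - r) := by
  obtain ⟨T, hT⟩ : ∃ T, ∀ t ≥ T, 2 ≤ t ∧ 2 * γ ≤ t ^ (γ - 1) ∧ 1 + 1 / a ≤ t :=
    eventually_atTop.1 <| (eventually_ge_atTop 2).and <|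
      ((tendsto_rpow_atTop (by linarith)).eventually_ge_atTop _).and (eventually_ge_atTop _)
  obtain ⟨m, hm, M, hM, hnear⟩ :=
    powBregman_comparable_quadPowGauge_of_le_mul hγ ha hab (by linarith [(hT T le_rfl).1] : 1 < T)
  refine ⟨min m (1 / 2), by positivity, max M (2 ^ γ), by positivity, ?_⟩
  rintro ϱ r hϱ ⟨har, hrb⟩
  have hr : 0 < r := ha.trans_le har
  have hgauge := quadPowGauge_nonneg γ (ϱ - r)
  have hmin := mul_le_mul_of_nonneg_right (min_le_left m (1 / 2)) hgauge
  have hmin' := mul_le_mul_of_nonneg_right (min_le_right m (1 / 2)) hgauge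
  have hmax := mul_le_mul_of_nonneg_right (le_max_left M (2 ^ γ)) hgauge
  have hmax' := mul_le_mul_of_nonneg_right (le_max_right M (2 ^ γ)) hgauge
  rcases le_total ϱ (r * T) with hϱT | hTϱ
  · obtain ⟨hlow, hup⟩ := hnear ϱ r hϱ ⟨har, hrb⟩ hϱT
    exact ⟨hmin.trans hlow, hup.trans hmax⟩
  · obtain ⟨ht2, htγ, hta⟩ := hT (ϱ / r) ((le_div_iff₀' hr).2 hTϱ)
    have hd : 1 ≤ ϱ - r := by
      have h1 : 1 ≤ a * (ϱ / r - 1) := (div_le_iff₀' ha).1 (by linarith)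
      calc 1 ≤ r * (ϱ / r - 1) := h1.trans (mul_le_mul_of_nonneg_right har (by linarith))
        _ = ϱ - r := by field_simp
    obtain ⟨hlow, hup⟩ := powBregman_comparable_quadPowGauge_of_large hγ.le hr hd ht2 htγ
    exact ⟨by linarith, hup.trans hmax'⟩

theorem IsCompact.exists_subset_Icc_of_subset_Ioi {K : Set ℝ} (hK : IsCompact K)
    (hK' : K ⊆ Ioi 0) : ∃ a > 0, ∃ b ≥ a, K ⊆ Icc a b := by
  rcases K.eq_empty_or_nonempty with rfl | hne
  · exact ⟨1, one_pos, 1, le_rfl, empty_subset _⟩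
  obtain ⟨a, haK, ha⟩ := hK.exists_isLeast hne
  obtain ⟨b, hbK, hb⟩ := hK.exists_isGreatest hne
  exact ⟨a, hK' haK, b, ha hbK, fun r hr ↦ ⟨ha hr, hb hr⟩⟩

/-- Two-sided comparison of the relative entropy `H(ϱ|r)` with quadratic behavior near `r`
and power-`γ` behavior at infinity, uniformly for `r` in a compact subset of `(0,∞)`. -/
theorem relative_entropy_two_sided_bounds (γ : ℝ) (hγ : 1 < γ)
    (K : Set ℝ) (hK : IsCompact K) (hK' : K ⊆ Set.Ioi (0 : ℝ)) :
    ∃ c₃ > (0 : ℝ), ∃ c₄ > (0 : ℝ), ∀ ϱ r : ℝ, 0 ≤ ϱ → r ∈ K →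
      c₃ * (if |ϱ - r| < 1 then |ϱ - r| ^ (2 : ℝ) else |ϱ - r| ^ γ) ≤
          ϱ ^ γ / (γ - 1) - r ^ γ / (γ - 1) - (γ * r ^ (γ - 1) / (γ - 1)) * (ϱ - r) ∧
        ϱ ^ γ / (γ - 1) - r ^ γ / (γ - 1) - (γ * r ^ (γ - 1) / (γ - 1)) * (ϱ - r) ≤
          c₄ * (if |ϱ - r| < 1 then |ϱ - r| ^ (2 : ℝ) else |ϱ - r| ^ γ) := by
  have hγ1 : 0 < γ - 1 := sub_pos.2 hγ
  obtain ⟨a, ha, b, hab, hKab⟩ := hK.exists_subset_Icc_of_subset_Ioi hK'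
  obtain ⟨m, hm, M, hM, hbounds⟩ := powBregman_comparable_quadPowGauge hγ ha hab
  refine ⟨m / (γ - 1), div_pos hm hγ1, M / (γ - 1), div_pos hM hγ1, fun ϱ r hϱ hr ↦ ?_⟩
  have hrelEntropy : ϱ ^ γ / (γ - 1) - r ^ γ / (γ - 1) - (γ * r ^ (γ - 1) / (γ - 1)) * (ϱ - r) =
      powBregman γ ϱ r / (γ - 1) := by
    unfold powBregman; ring
  obtain ⟨hlow, hup⟩ := hbounds ϱ r hϱ (hKab hr)
  rw [hrelEntropy, div_mul_eq_mul_div, div_mul_eq_mul_div]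
  exact ⟨div_le_div_of_nonneg_right hlow hγ1.le, div_le_div_of_nonneg_right hup hγ1.le⟩
end

section
/- Let γ > 1 and ν ∈ [1/(3γ−2), 1). Assume μ : [0,∞) → [0,∞) is differentiable with μ(0) ≥ 0, μ'(ϱ) ≥ ν for all ϱ, and λ(ϱ) = 2(ϱ μ'(ϱ) − μ(ϱ)) satisfies ν μ(ϱ) ≤ 2μ(ϱ) + 3λ(ϱ) ≤ (1/ν) μ(ϱ). Then there is c₁ > 0 such that μ(ϱ) ≤ c₁ ϱ^{2/3 + ν/3} for ϱ ≤ 1 and μ(ϱ) ≤ c₁ ϱ^{2/3 + 1/(3ν)} for ϱ ≥ 1. -/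
/-- Under the structural assumptions on the viscosity `μ` (with
`λ(ϱ) = 2(ϱ μ'(ϱ) - μ(ϱ))` and `ν μ ≤ 2μ + 3λ ≤ μ/ν`, `μ' ≥ ν`,
`ν ∈ [1/(3γ-2), 1)`), one has power-law bounds
`μ(ϱ) ≤ c₁ ϱ^{2/3+ν/3}` for `ϱ ≤ 1` and `μ(ϱ) ≤ c₁ ϱ^{2/3+1/(3ν)}` for `ϱ ≥ 1`. -/
theorem mu_power_law_bounds (γ ν : ℝ) (hγ : 1 < γ)
    (hν1 : 1 / (3 * γ - 2) ≤ ν) (hν2 : ν < 1)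
    (μ : ℝ → ℝ) (hdiff : Differentiable ℝ μ)
    (hμ0 : 0 ≤ μ 0) (hμnonneg : ∀ ϱ : ℝ, 0 ≤ ϱ → 0 ≤ μ ϱ)
    (hμ' : ∀ ϱ : ℝ, 0 ≤ ϱ → ν ≤ deriv μ ϱ)
    (h1 : ∀ ϱ : ℝ, 0 ≤ ϱ →
      ν * μ ϱ ≤ 2 * μ ϱ + 3 * (2 * (ϱ * deriv μ ϱ - μ ϱ)))
    (h2 : ∀ ϱ : ℝ, 0 ≤ ϱ →
      2 * μ ϱ + 3 * (2 * (ϱ * deriv μ ϱ - μ ϱ)) ≤ (1 / ν) * μ ϱ) :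
    ∃ c₁ > (0 : ℝ),
      (∀ ϱ : ℝ, 0 ≤ ϱ → ϱ ≤ 1 → μ ϱ ≤ c₁ * ϱ ^ (2 / 3 + ν / 3)) ∧
      (∀ ϱ : ℝ, 1 ≤ ϱ → μ ϱ ≤ c₁ * ϱ ^ (2 / 3 + 1 / (3 * ν))) := by
  have hγ' : (0:ℝ) < 3 * γ - 2 := by linarith
  have hν0 : 0 < ν := lt_of_lt_of_le (by positivity) hν1
  -- μ 0 = 0
  have hμ00 : μ 0 = 0 := by
    have h := h1 0 le_rfl
    have : (ν + 4) * μ 0 ≤ 0 := by nlinarith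
    nlinarith
  have hm : ν ≤ deriv μ 0 := hμ' 0 le_rfl
  set m := deriv μ 0 with hmdef
  -- slope tendsto
  have hslope : Filter.Tendsto (fun t => μ t / t) (nhdsWithin 0 (Set.Ioi 0)) (nhds m) := by
    have h := (hdiff 0).hasDerivAt
    rw [hasDerivAt_iff_tendsto_slope] at h
    have hsub : Set.Ioi (0:ℝ) ⊆ {(0:ℝ)}ᶜ := fun x hx => ne_of_gt hx
    have h2' := h.mono_left (nhdsWithin_mono 0 hsub)
    refine h2'.congr ?_
    intro t
    simp [slope_def_field, hμ00]
  have hev : ∀ᶠ t in nhdsWithin 0 (Set.Ioi 0), μ t / t < m + 1 :=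
    hslope.eventually_lt_const (by linarith)
  obtain ⟨δ, hδmem, hδ⟩ := mem_nhdsGT_iff_exists_Ioc_subset.mp hev
  have hδ0 : (0:ℝ) < δ := hδmem
  set δ' := min δ 1 with hδ'def
  have hδ'0 : 0 < δ' := lt_min hδ0 one_pos
  have hδ'1 : δ' ≤ 1 := min_le_right _ _
  -- max on Icc δ' 1
  obtain ⟨x₀, hx₀mem, hx₀⟩ := isCompact_Icc.exists_isMaxOn ⟨1, hδ'1, le_rfl⟩
    (hdiff.continuous.continuousOn : ContinuousOn μ (Set.Icc δ' 1))
  have hx₀0 : 0 ≤ μ x₀ := hμnonneg x₀ (le_trans hδ'0.le hx₀mem.1)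
  set α : ℝ := 2 / 3 + ν / 3 with hαdef
  have hα0 : 0 < α := by rw [hαdef]; positivity
  have hα1 : α ≤ 1 := by rw [hαdef]; linarith
  -- Gronwall exponent
  set b : ℝ := (4 + 1/ν) / 6 with hbdef
  have hb0 : 0 < b := by rw [hbdef]; positivity
  have key : ∀ t : ℝ, 0 < t → t * deriv μ t ≤ b * μ t := by
    intro t ht
    have h := h2 t ht.le
    rw [hbdef]
    linarith
  have hFanti : AntitoneOn (fun t => μ t * t ^ (-b)) (Set.Ici (1:ℝ)) := by
    apply antitoneOn_of_deriv_nonpos (convex_Ici 1)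
    · apply ContinuousOn.mul hdiff.continuous.continuousOn
      intro t ht
      have ht0 : t ≠ 0 := by
        have : (1:ℝ) ≤ t := ht
        linarith
      exact (Real.continuousAt_rpow_const t (-b) (Or.inl ht0)).continuousWithinAt
    · intro t ht
      rw [interior_Ici] at ht
      have ht0 : (0:ℝ) < t := lt_trans one_pos ht
      exact (((hdiff t).hasDerivAt).mul
        (Real.hasDerivAt_rpow_const (p := -b) (Or.inl ht0.ne'))).differentiableAt.differentiableWithinAt
    · intro t ht
      rw [interior_Ici] at ht
      have ht0 : (0:ℝ) < t := lt_trans one_pos ht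
      have hD : HasDerivAt (fun t => μ t * t ^ (-b))
          (deriv μ t * t ^ (-b) + μ t * (-b * t ^ (-b - 1))) t :=
        ((hdiff t).hasDerivAt).mul (Real.hasDerivAt_rpow_const (p := -b) (Or.inl ht0.ne'))
      rw [hD.deriv]
      have hk := key t ht0
      have hpow : t ^ (-b) = t ^ (-b - 1) * t := by
        rw [← Real.rpow_add_one ht0.ne' (-b - 1)]
        norm_num
      have hpos : (0:ℝ) < t ^ (-b - 1) := Real.rpow_pos_of_pos ht0 _
      rw [hpow]
      nlinarith [mul_le_mul_of_nonneg_left hk hpos.le]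
  have hup : ∀ t : ℝ, 1 ≤ t → μ t ≤ μ 1 * t ^ b := by
    intro t ht
    have hF := hFanti Set.self_mem_Ici (Set.mem_Ici.mpr ht) ht
    simp only [Real.one_rpow, mul_one] at hF
    have ht0 : (0:ℝ) < t := lt_of_lt_of_le one_pos ht
    have hpow : (0:ℝ) < t ^ b := Real.rpow_pos_of_pos ht0 b
    rw [Real.rpow_neg ht0.le] at hF
    calc μ t = μ t * (t ^ b)⁻¹ * t ^ b := by field_simp
      _ ≤ μ 1 * t ^ b := mul_le_mul_of_nonneg_right hF hpow.le
  set K : ℝ := max (max (m + 1) (μ x₀ / δ' ^ α)) (μ 1) with hKdef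
  have hK1 : m + 1 ≤ K := le_trans (le_max_left _ _) (le_max_left _ _)
  have hK2 : μ x₀ / δ' ^ α ≤ K := le_trans (le_max_right _ _) (le_max_left _ _)
  have hK3 : μ 1 ≤ K := le_max_right _ _
  have hKpos : 0 < K := lt_of_lt_of_le (by linarith) hK1
  refine ⟨K, hKpos, ?_, ?_⟩
  · intro t ht0 ht1
    rcases eq_or_lt_of_le ht0 with h0 | h0
    · rw [← h0, hμ00]
      exact mul_nonneg hKpos.le (Real.rpow_nonneg le_rfl _)
    · have htα : (0:ℝ) < t ^ α := Real.rpow_pos_of_pos h0 _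
      rcases le_or_gt t δ' with hcase | hcase
      · have hmem : t ∈ Set.Ioc 0 δ := ⟨h0, le_trans hcase (min_le_left _ _)⟩
        have hlt : μ t / t < m + 1 := hδ hmem
        have h' : μ t ≤ (m + 1) * t := by
          rw [div_lt_iff₀ h0] at hlt
          linarith
        have hpw : t ^ (1:ℝ) ≤ t ^ α := Real.rpow_le_rpow_of_exponent_ge h0 ht1 hα1
        rw [Real.rpow_one] at hpw
        have hm1 : 0 ≤ m + 1 := by linarith
        calc μ t ≤ (m + 1) * t := h'
          _ ≤ (m + 1) * t ^ α := mul_le_mul_of_nonneg_left hpw hm1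
          _ ≤ K * t ^ α := mul_le_mul_of_nonneg_right hK1 htα.le
      · have hmem : t ∈ Set.Icc δ' 1 := ⟨hcase.le, ht1⟩
        have h' : μ t ≤ μ x₀ := hx₀ hmem
        have hpw : δ' ^ α ≤ t ^ α := Real.rpow_le_rpow hδ'0.le hcase.le hα0.le
        have hδα : (0:ℝ) < δ' ^ α := Real.rpow_pos_of_pos hδ'0 _
        calc μ t ≤ μ x₀ := h'
          _ = μ x₀ / δ' ^ α * δ' ^ α := by field_simp
          _ ≤ μ x₀ / δ' ^ α * t ^ α := by
              apply mul_le_mul_of_nonneg_left hpw (by positivity)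
          _ ≤ K * t ^ α := mul_le_mul_of_nonneg_right hK2 htα.le
  · intro t ht
    have ht0 : (0:ℝ) < t := lt_of_lt_of_le one_pos ht
    have hbβ : b ≤ 2 / 3 + 1 / (3 * ν) := by
      rw [hbdef]
      have : 0 < 1 / ν := by positivity
      rw [div_le_iff₀ (by norm_num : (0:ℝ) < 6)]
      have h6 : 1 / (3 * ν) = (1/ν) / 3 := by
        field_simp
      rw [h6]
      nlinarith
    have hpw : t ^ b ≤ t ^ (2 / 3 + 1 / (3 * ν)) :=
      Real.rpow_le_rpow_of_exponent_le ht hbβ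
    have hμ1 : 0 ≤ μ 1 := hμnonneg 1 (by norm_num)
    calc μ t ≤ μ 1 * t ^ b := hup t ht
      _ ≤ μ 1 * t ^ (2 / 3 + 1 / (3 * ν)) := mul_le_mul_of_nonneg_left hpw hμ1
      _ ≤ K * t ^ (2 / 3 + 1 / (3 * ν)) :=
          mul_le_mul_of_nonneg_right hK3 (Real.rpow_pos_of_pos ht0 _).le
end
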